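/- Let (c₁,c₂) ∈ ℝ². Then Re[α₂(c₁,c₂)] ≤ −1/2 if and only if c₂ ≥ 45 + 12c₁ + c₁² when c₁ ≥ −11/4, and c₂ ≥ −105/16 − (19/2)c₁ when c₁ < −11/4. -/

import Mathlib

/-! Writing `Re √z = √((‖z‖ + Re z) / 2)`, the condition `r ≤ Re √z` becomes the polynomial
inequality `4 r² (r² - Re z) ≤ (Im z)²`. For `α₂` the inner square root is that of the real number
`D = 1 - 4c₁ + c₁² - c₂`, which is `√D` or `i √(-D)` according to the sign of `D`; with `r = 4` this
turns `Re α₂ ≤ -1/2` into `4√D ≤ -11 - 4c₁` when `D ≥ 0` and into `44 + 16c₁ ≤ -D` when `D ≤ 0`,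
and each of these is the stated region intersected with the corresponding half of the plane. -/

noncomputable section

/-- The principal branch of the complex square root:
`√z = √r·e^{iφ/2}` for `z = r·e^{iφ}` with `r > 0` and `-π < φ ≤ π`. -/
def csqrt (z : ℂ) : ℂ := z ^ (1/2 : ℂ)

/-- `α₁(c₁,c₂) = 3/2 - (1/2)√(5-4c₁+4√(1-4c₁+c₁²-c₂))`. -/
def alpha1 (c₁ c₂ : ℝ) : ℂ :=
  3/2 - (1/2) * csqrt (5 - 4 * (c₁ : ℂ) + 4 * csqrt (1 - 4 * (c₁ : ℂ) + (c₁ : ℂ) ^ 2 - (c₂ : ℂ)))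

/-- `α₂(c₁,c₂) = 3/2 - (1/2)√(5-4c₁-4√(1-4c₁+c₁²-c₂))`. -/
def alpha2 (c₁ c₂ : ℝ) : ℂ :=
  3/2 - (1/2) * csqrt (5 - 4 * (c₁ : ℂ) - 4 * csqrt (1 - 4 * (c₁ : ℂ) + (c₁ : ℂ) ^ 2 - (c₂ : ℂ)))

/-- `α₃(c₁,c₂) = 3/2 + (1/2)√(5-4c₁-4√(1-4c₁+c₁²-c₂))`. -/
def alpha3 (c₁ c₂ : ℝ) : ℂ :=
  3/2 + (1/2) * csqrt (5 - 4 * (c₁ : ℂ) - 4 * csqrt (1 - 4 * (c₁ : ℂ) + (c₁ : ℂ) ^ 2 - (c₂ : ℂ)))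

/-- `α₄(c₁,c₂) = 3/2 + (1/2)√(5-4c₁+4√(1-4c₁+c₁²-c₂))`. -/
def alpha4 (c₁ c₂ : ℝ) : ℂ :=
  3/2 + (1/2) * csqrt (5 - 4 * (c₁ : ℂ) + 4 * csqrt (1 - 4 * (c₁ : ℂ) + (c₁ : ℂ) ^ 2 - (c₂ : ℂ)))

lemma csqrt_re (z : ℂ) : (csqrt z).re = √((‖z‖ + z.re) / 2) := by
  rw [csqrt, one_div]
  exact Complex.cpow_inv_two_re z

lemma le_re_csqrt_iff {r : ℝ} (hr : 0 ≤ r) (z : ℂ) :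
    r ≤ (csqrt z).re ↔ 4 * r ^ 2 * (r ^ 2 - z.re) ≤ z.im ^ 2 := by
  have hnorm : ‖z‖ = √(z.re ^ 2 + z.im ^ 2) := by
    rw [Complex.norm_def, Complex.normSq_apply]; ring_nf
  rw [csqrt_re, Real.le_sqrt hr (by linarith [Complex.abs_re_le_norm z, neg_abs_le z.re])]
  rcases le_or_gt (2 * r ^ 2) z.re with h | h
  · exact iff_of_true (by linarith [norm_nonneg z]) (by nlinarith [sq_nonneg z.im, sq_nonneg r])
  · rw [le_div_iff₀ two_pos, ← sub_le_iff_le_add, hnorm, Real.le_sqrt (by linarith) (by positivity)]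
    constructor <;> intro <;> nlinarith

/-- Since `√` vanishes on negative reals, exactly one of the two terms survives. -/
lemma csqrt_ofReal (x : ℝ) : csqrt x = √x + √(-x) * Complex.I := by
  have him : (csqrt x).im = √((‖(x : ℂ)‖ - x) / 2) := by
    rw [csqrt, one_div, Complex.cpow_inv_two_im_eq_sqrt (by simp)]
    simp
  apply Complex.ext <;> simp only [csqrt_re, him, Complex.add_re, Complex.add_im,
    Complex.ofReal_re, Complex.ofReal_im, Complex.re_ofReal_mul, Complex.im_ofReal_mul,
    Complex.I_re, Complex.I_im, Complex.norm_real, Real.norm_eq_abs]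
  all_goals rcases le_total 0 x with h | h
  · rw [abs_of_nonneg h, add_self_div_two, Real.sqrt_eq_zero_of_nonpos (neg_nonpos.2 h)]; ring
  · rw [abs_of_nonpos h, neg_add_cancel, zero_div, Real.sqrt_zero, Real.sqrt_eq_zero_of_nonpos h]; ring
  · rw [abs_of_nonneg h, sub_self, zero_div, Real.sqrt_zero, Real.sqrt_eq_zero_of_nonpos (neg_nonpos.2 h)]; ring
  · rw [abs_of_nonpos h, show (-x - x) / 2 = -x by ring]; ring

def disc (c₁ c₂ : ℝ) : ℝ := 1 - 4 * c₁ + c₁ ^ 2 - c₂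

lemma alpha2_re_le_iff (c₁ c₂ : ℝ) :
    (alpha2 c₁ c₂).re ≤ -1/2 ↔ 4 * (11 + 4 * c₁ + 4 * √(disc c₁ c₂)) ≤ √(-disc c₁ c₂) ^ 2 := by
  set w : ℂ := 5 - 4 * (c₁ : ℂ) - 4 * csqrt (disc c₁ c₂)
  have hα : (alpha2 c₁ c₂).re = 3/2 - (csqrt w).re / 2 := by
    simp only [alpha2, w, disc]; push_cast; simp [div_eq_inv_mul]
  have hre : w.re = 5 - 4 * c₁ - 4 * √(disc c₁ c₂) := by simp [w, csqrt_ofReal]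
  have him : w.im = -4 * √(-disc c₁ c₂) := by simp [w, csqrt_ofReal]
  rw [hα, show 3/2 - (csqrt w).re / 2 ≤ -1/2 ↔ 4 ≤ (csqrt w).re by constructor <;> intro <;> linarith,
    le_re_csqrt_iff zero_le_four, hre, him]
  constructor <;> intro <;> linarith

def alpha2Region (c₁ c₂ : ℝ) : Prop :=
  (-11/4 ≤ c₁ → 45 + 12 * c₁ + c₁ ^ 2 ≤ c₂) ∧ (c₁ < -11/4 → -105/16 - (19/2) * c₁ ≤ c₂)

section
variable {c₁ c₂ : ℝ}

lemma alpha2Region_iff_of_disc_nonneg (hD : 0 ≤ disc c₁ c₂) :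
    alpha2Region c₁ c₂ ↔ 4 * √(disc c₁ c₂) ≤ -11 - 4 * c₁ := by
  have hdisc : disc c₁ c₂ = 1 - 4 * c₁ + c₁ ^ 2 - c₂ := rfl
  have hs := Real.sq_sqrt hD
  have hs0 := Real.sqrt_nonneg (disc c₁ c₂)
  constructor
  · rintro ⟨h₁, h₂⟩
    rcases le_or_gt (-11/4) c₁ with hc | hc
    · nlinarith [h₁ hc]
    · nlinarith [h₂ hc]
  · intro h
    exact ⟨fun hc => by nlinarith, fun hc => by nlinarith⟩

/-- For `c₁ < -11/4` both sides hold: `c₂ + 105/16 + (19/2) c₁ = (c₁ + 11/4)² - disc c₁ c₂`, i.e. the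
line is tangent to the parabola `disc c₁ c₂ = 0` at `c₁ = -11/4`. -/
lemma alpha2Region_iff_of_disc_nonpos (hD : disc c₁ c₂ ≤ 0) :
    alpha2Region c₁ c₂ ↔ 44 + 16 * c₁ ≤ -disc c₁ c₂ := by
  have hdisc : disc c₁ c₂ = 1 - 4 * c₁ + c₁ ^ 2 - c₂ := rfl
  constructor
  · rintro ⟨h₁, -⟩
    rcases le_or_gt (-11/4) c₁ with hc | hc
    · linarith [h₁ hc]
    · linarith
  · intro h
    exact ⟨fun _ => by linarith, fun _ => by nlinarith [sq_nonneg (c₁ + 11/4)]⟩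

end

lemma alpha2Region_iff (c₁ c₂ : ℝ) :
    alpha2Region c₁ c₂ ↔ 4 * (11 + 4 * c₁ + 4 * √(disc c₁ c₂)) ≤ √(-disc c₁ c₂) ^ 2 := by
  rcases le_total 0 (disc c₁ c₂) with hD | hD
  · rw [alpha2Region_iff_of_disc_nonneg hD, Real.sqrt_eq_zero_of_nonpos (neg_nonpos.2 hD)]
    constructor <;> intro <;> linarith
  · rw [alpha2Region_iff_of_disc_nonpos hD, Real.sqrt_eq_zero_of_nonpos hD,
      Real.sq_sqrt (neg_nonneg.2 hD)]
    constructor <;> intro <;> linarith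

theorem stmt7 (c₁ c₂ : ℝ) :
    (alpha2 c₁ c₂).re ≤ -1/2 ↔
      ((-11/4 ≤ c₁ → 45 + 12 * c₁ + c₁ ^ 2 ≤ c₂) ∧
        (c₁ < -11/4 → -105/16 - (19/2) * c₁ ≤ c₂)) :=
  (alpha2_re_le_iff c₁ c₂).trans (alpha2Region_iff c₁ c₂).symm
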